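/- arXiv:1210.1078 — 2 statements merged into one kernel-verified Lean document; each statement's English description precedes it below -/
import Mathlib

section
/- If p is a prime with p ≡ 1 (mod 4), then there is no 1-factorization of the complete multipartite graph K_{p×2} admitting an abelian group of automorphisms acting sharply transitively on the vertex set. -/
open SimpleGraph

/-- The complete multipartite graph `K_{m×n}` with `m` parts each of size `n`:
two vertices are adjacent iff they lie in different parts. -/
def completeMultipartite (m n : ℕ) : SimpleGraph (Fin m × Fin n) where
  Adj u v := u.1 ≠ v.1
  symm := ⟨fun _ _ h => Ne.symm h⟩
  loopless := ⟨fun _ h => h rfl⟩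

/-- `M` is a 1-factor (perfect matching) of `Γ`: a set of edges of `Γ` such that
every vertex lies in exactly one edge of `M`. -/
def IsOneFactor {V : Type*} (Γ : SimpleGraph V) (M : Set (Sym2 V)) : Prop :=
  M ⊆ Γ.edgeSet ∧ ∀ v : V, ∃! e : Sym2 V, e ∈ M ∧ v ∈ e

/-- `F` is a 1-factorization of `Γ`: a collection of 1-factors such that every
edge of `Γ` lies in exactly one member of `F`. -/
def IsOneFactorization {V : Type*} (Γ : SimpleGraph V) (F : Set (Set (Sym2 V))) : Prop :=
  (∀ M ∈ F, IsOneFactor Γ M) ∧ ∀ e ∈ Γ.edgeSet, ∃! M : Set (Sym2 V), M ∈ F ∧ e ∈ M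

/-- The 1-factorization `F` of `Γ` admits the group `A`, acting on the vertices via `φ`,
as a group of automorphisms mapping factors to factors and acting sharply transitively
on the vertices. -/
def IsSharplyTransitiveOneFactorization {V : Type*} (Γ : SimpleGraph V)
    (A : Type*) [Group A] (φ : A →* Equiv.Perm V) (F : Set (Set (Sym2 V))) : Prop :=
  IsOneFactorization Γ F ∧
  (∀ a : A, ∀ u v : V, Γ.Adj (φ a u) (φ a v) ↔ Γ.Adj u v) ∧
  (∀ a : A, ∀ M ∈ F, Sym2.map (φ a) '' M ∈ F) ∧
  (∀ u v : V, ∃! a : A, φ a u = v)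

/-- `Γ` admits a 1-factorization with `A` as an automorphism group acting sharply
transitively on the vertex set. -/
def HasRegularOneFactorization {V : Type*} (Γ : SimpleGraph V) (A : Type*) [Group A] : Prop :=
  ∃ (φ : A →* Equiv.Perm V) (F : Set (Set (Sym2 V))),
    IsSharplyTransitiveOneFactorization Γ A φ F


/-!
Let `A` act regularly on the vertices of `K_{p×2}`, preserving a 1-factorization. Every
automorphism commutes with the involution `π` swapping each vertex with its unique
non-neighbour; since `A` is abelian and regular, `π` is itself the action of some `s ∈ A`,
with `s² = 1`. Pick `b ∈ A` of order `p` and let `M` be the factor through the edge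
`{x₀, b x₀}`, with stabilizer `H ≤ A`.

`H` is nontrivial: otherwise the `2p` translates of `M` would be pairwise distinct factors,
giving `2p` distinct edges at `x₀`, which has only `2p - 2` neighbours. `s ∉ H`: otherwise `π`
and the matching `M` generate a free action of the Klein four-group on the `2p` vertices,
and `4 ∤ 2p`. As `s ^ [A : H] ∈ H`, the index of `H` is even, hence `2`, so `H` contains `b`.
Then `M` contains both `{x₀, b x₀}` and `{b x₀, b² x₀}`, which forces `b² = 1`.
-/

open SimpleGraph Function Equiv

lemma four_dvd_card_of_commute_involutive {α : Type*} [Finite α] {f g : α → α}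
    (hf : Involutive f) (hg : Involutive g) (hfg : Function.Commute f g)
    (hf₀ : ∀ x, f x ≠ x) (hg₀ : ∀ x, g x ≠ x) (hfg₀ : ∀ x, f x ≠ g x) :
    4 ∣ Nat.card α := by
  let act (k : ZMod 2 × ZMod 2) : α → α :=
    (if k.1 = 0 then id else f) ∘ (if k.2 = 0 then id else g)
  have act_add : ∀ k k' x, act (k + k') x = act k (act k' x) := by
    have hf' : ∀ x, f (f x) = x := hf
    have hg' : ∀ x, g (g x) = x := hg
    have hgf : ∀ x, g (f x) = f (g x) := fun x => (hfg x).symm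
    rintro ⟨i, j⟩ ⟨i', j'⟩ x
    fin_cases i <;> fin_cases j <;> fin_cases i' <;> fin_cases j' <;>
      simp +decide [act, hf', hg', hgf]
  let _ : AddAction (ZMod 2 × ZMod 2) α :=
    { vadd := act
      zero_vadd x := by simp [HVAdd.hVAdd, act]
      add_vadd := act_add }
  have hfree (x : α) : AddAction.stabilizer (ZMod 2 × ZMod 2) x = ⊥ := by
    ext ⟨i, j⟩
    rw [AddAction.mem_stabilizer_iff, AddSubgroup.mem_bot]
    have hfg₀' : f (g x) ≠ x := fun h => hfg₀ x (by rw [← congrArg f h, hf (g x)])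
    change act (i, j) x = x ↔ (i, j) = 0
    fin_cases i <;> fin_cases j <;> simp +decide [act, hf₀, hg₀, hfg₀']
  rw [Nat.card_congr (AddAction.selfEquivOrbitsQuotientProd hfree), Nat.card_prod]
  exact dvd_mul_of_dvd_right (by simp) _

theorem Subgroup.index_eq_two_of_sq_eq_one_of_notMem {G : Type*} [Group G] [Finite G] {p : ℕ}
    (hp : p.Prime) (hG : Nat.card G = 2 * p) {H : Subgroup G} [H.Normal]
    (hH : H ≠ ⊥) {s : G} (hs : s ^ 2 = 1) (hsH : s ∉ H) : H.index = 2 := by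
  obtain ⟨j, hj⟩ : 2 ∣ H.index := by
    by_contra hodd
    obtain ⟨k, hk⟩ := Nat.odd_iff.mpr (Nat.two_dvd_ne_zero.mp hodd)
    apply hsH
    simpa [hk, pow_succ, pow_mul, hs] using H.pow_index_mem s
  have hjp : j ∣ p := by
    have := H.index_dvd_card
    rw [hG, hj] at this
    exact Nat.dvd_of_mul_dvd_mul_left two_pos this
  rcases hp.eq_one_or_self_of_dvd j hjp with rfl | rfl
  · exact hj
  · refine absurd ?_ hH
    rw [← Subgroup.card_eq_one]
    have := H.card_mul_index
    rw [hj, ← hG] at this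
    exact (Nat.mul_eq_right Nat.card_pos.ne').mp this

theorem Subgroup.mem_of_pow_eq_one_of_index_eq_two {G : Type*} [Group G] {H : Subgroup G}
    [H.Normal] (hH : H.index = 2) {n : ℕ} (hn : Odd n) {b : G} (hb : b ^ n = 1) : b ∈ H := by
  obtain ⟨k, rfl⟩ := hn
  have : b = (b ^ 2) ^ (k + 1) := by
    rw [← pow_mul, mul_add, mul_one, pow_add _ (2 * k), pow_two, ← mul_assoc, ← pow_succ, hb,
      one_mul]
  rw [this]
  exact H.pow_mem (hH ▸ H.pow_index_mem b) _

namespace IsOneFactor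

variable {V : Type*} {Γ : SimpleGraph V} {M : Set (Sym2 V)} (hM : IsOneFactor Γ M)

noncomputable def mate (v : V) : V :=
  Sym2.Mem.other (hM.2 v).exists.choose_spec.2

lemma mk_mate_mem (v : V) : s(v, hM.mate v) ∈ M := by
  rw [mate, Sym2.other_spec]
  exact (hM.2 v).exists.choose_spec.1

lemma eq_mate_of_mk_mem {v w : V} (h : s(v, w) ∈ M) : w = hM.mate v :=
  Sym2.congr_right.mp <|
    (hM.2 v).unique ⟨h, Sym2.mem_mk_left v w⟩ ⟨hM.mk_mate_mem v, Sym2.mem_mk_left _ _⟩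

lemma adj_mate (v : V) : Γ.Adj v (hM.mate v) :=
  hM.1 (hM.mk_mate_mem v)

lemma mate_involutive : Involutive hM.mate := fun v =>
  (hM.eq_mate_of_mk_mem (Sym2.eq_swap ▸ hM.mk_mate_mem v)).symm

end IsOneFactor

theorem IsOneFactor.four_dvd_card_of_image_eq {V : Type*} [Finite V] {Γ : SimpleGraph V}
    {M : Set (Sym2 V)} (hM : IsOneFactor Γ M) {π : V → V} (hπ : Involutive π)
    (hπ₀ : ∀ v, π v ≠ v) (hπΓ : ∀ v, ¬Γ.Adj v (π v)) (hMπ : Sym2.map π '' M = M) :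
    4 ∣ Nat.card V := by
  refine four_dvd_card_of_commute_involutive hM.mate_involutive hπ (fun v => ?_)
    (fun v => (hM.adj_mate v).ne') hπ₀ (fun v h => hπΓ v (h ▸ hM.adj_mate v))
  exact (hM.eq_mate_of_mk_mem (hMπ.subset ⟨_, hM.mk_mate_mem v, Sym2.map_mk _ _ _⟩)).symm

section RegularAction

variable {A V : Type*} [Group A] {φ : A →* Perm V}

def IsSharplyTransitive (φ : A →* Perm V) : Prop :=
  ∀ u v, ∃! a, φ a u = v

lemma IsSharplyTransitive.eq_one_of_apply_eq_self (hφ : IsSharplyTransitive φ) {a : A} {v : V}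
    (h : φ a v = v) : a = 1 :=
  (hφ v v).unique h (by simp)

lemma IsSharplyTransitive.card_eq (hφ : IsSharplyTransitive φ) (v₀ : V) :
    Nat.card A = Nat.card V :=
  Nat.card_eq_of_bijective (fun a => φ a v₀)
    ⟨fun _ _ h => (hφ v₀ _).unique h rfl, fun v => (hφ v₀ v).exists⟩

lemma image_sym2Map_mul (a c : A) (N : Set (Sym2 V)) :
    Sym2.map (φ (a * c)) '' N = Sym2.map (φ a) '' (Sym2.map (φ c) '' N) := by
  simp only [Set.image_image, Sym2.map_map, map_mul, Perm.coe_mul]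

variable (φ) in
def factorStabilizer (M : Set (Sym2 V)) : Subgroup A where
  carrier := {a | Sym2.map (φ a) '' M = M}
  one_mem' := by simp
  mul_mem' {a c} (ha : _ = M) (hc : _ = M) := by
    change _ = M
    rw [image_sym2Map_mul, hc, ha]
  inv_mem' {a} (ha : _ = M) := by
    change _ = M
    conv_lhs => rw [← ha, ← image_sym2Map_mul, inv_mul_cancel]
    simp

lemma mem_factorStabilizer {a : A} {M : Set (Sym2 V)} :
    a ∈ factorStabilizer φ M ↔ Sym2.map (φ a) '' M = M :=
  Iff.rfl

lemma IsSharplyTransitive.factorStabilizer_ne_bot [Finite V] (hφ : IsSharplyTransitive φ)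
    {Γ : SimpleGraph V} {F : Set (Set (Sym2 V))} (hF : IsOneFactorization Γ F)
    (hinv : ∀ a, ∀ M ∈ F, Sym2.map (φ a) '' M ∈ F) {M : Set (Sym2 V)} (hM : M ∈ F) (v₀ : V) :
    factorStabilizer φ M ≠ ⊥ := by
  intro hbot
  have hfac (a : A) := hF.1 _ (hinv a M hM)
  let m (a : A) : V := (hfac a).mate v₀
  have hm_inj : Injective m := by
    intro a c (hac : (hfac a).mate v₀ = (hfac c).mate v₀)
    have himage : Sym2.map (φ a) '' M = Sym2.map (φ c) '' M :=
      (hF.2 _ ((hfac a).1 ((hfac a).mk_mate_mem v₀))).unique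
        ⟨hinv a M hM, (hfac a).mk_mate_mem v₀⟩ ⟨hinv c M hM, hac ▸ (hfac c).mk_mate_mem v₀⟩
    have hca : c⁻¹ * a ∈ factorStabilizer φ M := by
      rw [mem_factorStabilizer, image_sym2Map_mul, himage, ← image_sym2Map_mul, inv_mul_cancel]
      simp
    rw [hbot, Subgroup.mem_bot, inv_mul_eq_one] at hca
    exact hca.symm
  obtain ⟨a, ha⟩ := (hm_inj.bijective_of_nat_card_le (hφ.card_eq v₀).ge).2 v₀
  exact ((hfac a).adj_mate v₀).ne' ha

lemma IsOneFactor.apply_apply_eq_of_mem_factorStabilizer {Γ : SimpleGraph V}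
    {M : Set (Sym2 V)} (hM : IsOneFactor Γ M) {b : A} (hb : b ∈ factorStabilizer φ M) {v : V}
    (hv : s(v, φ b v) ∈ M) : φ b (φ b v) = v := by
  have hv' : s(φ b v, φ b (φ b v)) ∈ M := hb.subset ⟨_, hv, Sym2.map_mk _ _ _⟩
  rw [hM.eq_mate_of_mk_mem hv', ← hM.eq_mate_of_mk_mem (Sym2.eq_swap ▸ hv)]

end RegularAction

lemma IsSharplyTransitive.exists_apply_eq_of_commute {A V : Type*} [CommGroup A]
    {φ : A →* Perm V} (hφ : IsSharplyTransitive φ) {π : V → V}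
    (hπ : ∀ a v, φ a (π v) = π (φ a v)) (v₀ : V) : ∃ s, ∀ v, φ s v = π v := by
  obtain ⟨s, hs, -⟩ := hφ v₀ (π v₀)
  refine ⟨s, fun v => ?_⟩
  obtain ⟨a, rfl, -⟩ := hφ v₀ v
  rw [← Perm.mul_apply, ← map_mul, mul_comm, map_mul, Perm.mul_apply, hs, hπ]

section Partner

variable {m : ℕ}

def partner (v : Fin m × Fin 2) : Fin m × Fin 2 := (v.1, v.2 + 1)

lemma partner_involutive : Involutive (partner (m := m)) := fun v => by
  simp [partner, add_assoc]

lemma partner_ne (v : Fin m × Fin 2) : partner v ≠ v := fun h => by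
  simpa [partner] using congrArg Prod.snd h

lemma not_adj_partner (v : Fin m × Fin 2) : ¬(completeMultipartite m 2).Adj v (partner v) :=
  fun h => h rfl

lemma eq_partner_of_not_adj {u v : Fin m × Fin 2} (h : ¬(completeMultipartite m 2).Adj u v)
    (hne : u ≠ v) : v = partner u := by
  have hfst : u.1 = v.1 := not_not.mp h
  have fin_two : ∀ i j : Fin 2, i ≠ j → j = i + 1 := by decide
  exact Prod.ext hfst.symm (fin_two _ _ fun hsnd => hne (Prod.ext hfst hsnd))

lemma apply_partner (σ : Perm (Fin m × Fin 2))
    (hσ : ∀ u v, (completeMultipartite m 2).Adj (σ u) (σ v) ↔ (completeMultipartite m 2).Adj u v)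
    (v : Fin m × Fin 2) : σ (partner v) = partner (σ v) :=
  eq_partner_of_not_adj ((hσ _ _).not.mpr (not_adj_partner v))
    (σ.injective.ne (partner_ne v).symm)

variable {A : Type*} [Group A] {φ : A →* Perm (Fin m × Fin 2)}

lemma IsSharplyTransitive.sq_eq_one_of_apply_eq_partner (hφ : IsSharplyTransitive φ) {s : A}
    (hs : ∀ v, φ s v = partner v) (v₀ : Fin m × Fin 2) : s ^ 2 = 1 :=
  hφ.eq_one_of_apply_eq_self (v := v₀) (by simp [pow_two, hs, partner_involutive v₀])

lemma IsSharplyTransitive.adj_apply_of_sq_ne_one (hφ : IsSharplyTransitive φ) {s : A}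
    (hs : ∀ v, φ s v = partner v) {b : A} (hb : b ^ 2 ≠ 1) (v : Fin m × Fin 2) :
    (completeMultipartite m 2).Adj v (φ b v) := by
  by_contra h
  by_cases hfix : v = φ b v
  · exact hb (by rw [hφ.eq_one_of_apply_eq_self hfix.symm, one_pow])
  · have hbs : b = s := (hφ v _).unique (eq_partner_of_not_adj h hfix) (hs v)
    exact hb (hbs ▸ hφ.sq_eq_one_of_apply_eq_partner hs v)

lemma notMem_factorStabilizer_of_apply_eq_partner (hm : Odd m) {M : Set (Sym2 (Fin m × Fin 2))}
    (hM : IsOneFactor (completeMultipartite m 2) M) {s : A} (hs : ∀ v, φ s v = partner v) :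
    s ∉ factorStabilizer φ M := fun h => by
  have := hM.four_dvd_card_of_image_eq partner_involutive partner_ne not_adj_partner
    (by rwa [mem_factorStabilizer, show ⇑(φ s) = partner from funext hs] at h)
  rw [Nat.card_prod, Nat.card_fin, Nat.card_fin] at this
  obtain ⟨k, rfl⟩ := hm
  omega

end Partner

/-- If `p` is a prime with `p ≡ 1 (mod 4)`, there is no 1-factorization of `K_{p×2}`
with an abelian group acting sharply transitively on the vertices. -/
theorem no_abelian_oneFactorization_prime (p : ℕ) (hp : p.Prime) (hp4 : p % 4 = 1) :
    ∀ (A : Type) [CommGroup A],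
      ¬ HasRegularOneFactorization (completeMultipartite p 2) A := by
  rintro A _ ⟨φ, F, hF, hadj, hinv, hφ : IsSharplyTransitive φ⟩
  have : Fact p.Prime := ⟨hp⟩
  have hodd : Odd p := hp.odd_of_ne_two (by omega)
  let x₀ : Fin p × Fin 2 := (⟨0, hp.pos⟩, 0)
  have hcard : Nat.card A = 2 * p := by simp [hφ.card_eq x₀, mul_comm]
  have : Finite A := Nat.finite_of_card_ne_zero (hcard ▸ mul_ne_zero two_ne_zero hp.ne_zero)
  obtain ⟨s, hs⟩ := hφ.exists_apply_eq_of_commute (fun a => apply_partner (φ a) (hadj a)) x₀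
  obtain ⟨b, hb⟩ := exists_prime_orderOf_dvd_card' p (hcard ▸ dvd_mul_left p 2)
  have hb2 : b ^ 2 ≠ 1 := fun h => by
    have := Nat.le_of_dvd two_pos (hb ▸ orderOf_dvd_of_pow_eq_one h)
    have := hp.two_le
    omega
  obtain ⟨M, ⟨hMF, hM⟩, -⟩ := hF.2 _ ((mem_edgeSet _).2 (hφ.adj_apply_of_sq_ne_one hs hb2 x₀))
  have hMfac := hF.1 M hMF
  have hbM : b ∈ factorStabilizer φ M :=
    Subgroup.mem_of_pow_eq_one_of_index_eq_two
      (Subgroup.index_eq_two_of_sq_eq_one_of_notMem hp hcard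
        (hφ.factorStabilizer_ne_bot hF hinv hMF x₀) (hφ.sq_eq_one_of_apply_eq_partner hs x₀)
        (notMem_factorStabilizer_of_apply_eq_partner hodd hMfac hs))
      hodd (hb ▸ pow_orderOf_eq_one b)
  exact hb2 (pow_two b ▸ hφ.eq_one_of_apply_eq_self
    (by simpa using hMfac.apply_apply_eq_of_mem_factorStabilizer hbM hM))
end

section
/- For m = 2^v d with v ≥ 1 and d odd, the complete multipartite graph K_{m×2} admits a 1-factorization with the abelian group C_m × Z_2 as an automorphism group acting sharply transitively on the vertex set. -/
open SimpleGraph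

/-!
View `K_{|G|×2}` on `G × ℤ/2`, with parts `{x} × ℤ/2`, and fix an involution `h` of `G` (for
`G = ℤ/m`, `m` even, Cauchy's theorem provides one). Colour an edge inside a layer by the sum
`x + y` of its ends, and an edge between the layers by the difference `y - x` from its layer-0 end
`x` to its layer-1 end `y`, except that the difference `h` is merged into the sum colours as
`x + y + h`. Inside a layer, the sum colour `w` misses exactly the vertices with `2x = w`, and the
edges of difference `h` match these across the layers; a difference colour `s ∉ {0, h}` is a
perfect matching between the layers. So every colour class is a 1-factor. Translation by
`(g, k)` adds `2g` to sum colours and negates difference colours when `k = 1`, so it permutes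
the colour classes, and `G × ℤ/2` acts on itself regularly by translation.
-/

def Equiv.sym2Map {α β : Type*} (e : α ≃ β) : Sym2 α ≃ Sym2 β where
  toFun := Sym2.map e
  invFun := Sym2.map e.symm
  left_inv z := by simp [Sym2.map_map]
  right_inv z := by simp [Sym2.map_map]

theorem Sym2.apply_mem_map_iff {α β : Type*} {f : α → β} (hf : Function.Injective f) {a : α}
    {z : Sym2 α} : f a ∈ z.map f ↔ a ∈ z := by
  induction z using Sym2.inductionOn with
  | hf x y => simp [hf.eq_iff]

theorem Sym2.existsUnique_mem_of_existsUnique_mk {α : Type*} {M : Set (Sym2 α)} {u : α}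
    (h : ∃! v, s(u, v) ∈ M) : ∃! z, z ∈ M ∧ u ∈ z := by
  obtain ⟨v, hv, huniq⟩ := h
  refine ⟨s(u, v), ⟨hv, Sym2.mem_mk_left u v⟩, ?_⟩
  rintro z ⟨hz, hu⟩
  obtain ⟨w, rfl⟩ := Sym2.mem_iff_exists.1 hu
  rw [huniq w hz]

section Iso

variable {V W : Type*} {Γ : SimpleGraph V} {Γ' : SimpleGraph W}

theorem IsOneFactor.preimage_sym2Map (f : Γ ≃g Γ') {M : Set (Sym2 W)} (hM : IsOneFactor Γ' M) :
    IsOneFactor Γ (f.toEquiv.sym2Map ⁻¹' M) :=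
  ⟨fun _ hz => f.map_mem_edgeSet_iff.1 (hM.1 hz), fun v =>
    (f.toEquiv.sym2Map.existsUnique_congr fun _ =>
      and_congr_right' (Sym2.apply_mem_map_iff f.injective).symm).2 (hM.2 (f v))⟩

theorem HasRegularOneFactorization.of_iso {A : Type*} [Group A] (f : Γ ≃g Γ')
    (h : HasRegularOneFactorization Γ' A) : HasRegularOneFactorization Γ A := by
  obtain ⟨φ', F', ⟨hfac, hcover⟩, hadj, hmaps, hreg⟩ := h
  set E := f.toEquiv.sym2Map
  let φ : A →* Equiv.Perm V := f.toEquiv.symm.permCongrHom.toMonoidHom.comp φ'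
  have hφ : ∀ a v, f (φ a v) = φ' a (f v) := fun a v => f.toEquiv.apply_symm_apply _
  refine ⟨φ, Set.image E.symm '' F', ⟨?_, fun z hz => ?_⟩, fun a u v => ?_, ?_, fun u v => ?_⟩
  · rintro _ ⟨M', hM', rfl⟩
    rw [E.image_symm_eq_preimage]
    exact (hfac M' hM').preimage_sym2Map f
  · obtain ⟨M', ⟨hM', hzM'⟩, huniq⟩ := hcover (E z) (f.map_mem_edgeSet_iff.2 hz)
    refine ⟨E.symm '' M', ⟨⟨M', hM', rfl⟩, by rwa [E.image_symm_eq_preimage]⟩, ?_⟩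
    rintro _ ⟨⟨N', hN', rfl⟩, hzN⟩
    rw [E.image_symm_eq_preimage] at hzN
    rw [huniq N' ⟨hN', hzN⟩]
  · rw [← f.map_adj_iff, hφ, hφ, hadj, f.map_adj_iff]
  · rintro a _ ⟨M', hM', rfl⟩
    refine ⟨_, hmaps a M' hM', ?_⟩
    rw [Set.image_image, Set.image_image]
    refine Set.image_congr fun z _ => ?_
    simp only [E, Equiv.sym2Map, Equiv.coe_fn_symm_mk, Sym2.map_map]
    congr 1
    funext x
    simp [φ, Equiv.permCongr_apply]
  · exact (existsUnique_congr fun a => by rw [← f.injective.eq_iff, hφ]).2 (hreg (f u) (f v))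

end Iso

section Coloring

variable {V C : Type*} (Γ : SimpleGraph V) (col : Sym2 V → C)

def colorClass (c : C) : Set (Sym2 V) := {z ∈ Γ.edgeSet | col z = c}

def colorClasses : Set (Set (Sym2 V)) := (fun z => colorClass Γ col (col z)) '' Γ.edgeSet

variable {Γ col}

theorem isOneFactorization_colorClasses
    (hmatch : ∀ z ∈ Γ.edgeSet, ∀ u, ∃! v, Γ.Adj u v ∧ col s(u, v) = col z) :
    IsOneFactorization Γ (colorClasses Γ col) := by
  refine ⟨?_, fun z hz => ⟨_, ⟨⟨z, hz, rfl⟩, hz, rfl⟩, ?_⟩⟩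
  · rintro _ ⟨z, hz, rfl⟩
    exact ⟨fun _ h => h.1, fun u => Sym2.existsUnique_mem_of_existsUnique_mk (hmatch z hz u)⟩
  · rintro _ ⟨⟨z', -, rfl⟩, -, hcol⟩
    dsimp only
    rw [hcol]

variable [AddGroup V]

theorem map_addLeft_mem_edgeSet_iff (hadj : ∀ a u v, Γ.Adj (a + u) (a + v) ↔ Γ.Adj u v)
    (a : V) (z : Sym2 V) : z.map (a + ·) ∈ Γ.edgeSet ↔ z ∈ Γ.edgeSet :=
  Iso.map_mem_edgeSet_iff (G := Γ) (G' := Γ) ⟨Equiv.addLeft a, hadj a _ _⟩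

theorem image_addLeft_colorClass (hadj : ∀ a u v, Γ.Adj (a + u) (a + v) ↔ Γ.Adj u v)
    (hcol : ∀ a z₁ z₂, col z₁ = col z₂ → col (z₁.map (a + ·)) = col (z₂.map (a + ·)))
    (a : V) (z : Sym2 V) :
    Sym2.map (a + ·) '' colorClass Γ col (col z) = colorClass Γ col (col (z.map (a + ·))) := by
  have hedge := map_addLeft_mem_edgeSet_iff hadj
  ext z'
  constructor
  · rintro ⟨z'', ⟨hz'', hc⟩, rfl⟩
    exact ⟨(hedge a z'').2 hz'', hcol a _ _ hc⟩
  · rintro ⟨hz', hc⟩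
    refine ⟨z'.map (-a + ·), ⟨(hedge _ _).2 hz', ?_⟩, by simp [Sym2.map_map]⟩
    simpa [Sym2.map_map, Function.comp_def] using hcol (-a) _ _ hc

theorem hasRegularOneFactorization_of_coloring
    (hadj : ∀ a u v, Γ.Adj (a + u) (a + v) ↔ Γ.Adj u v)
    (hcol : ∀ a z₁ z₂, col z₁ = col z₂ → col (z₁.map (a + ·)) = col (z₂.map (a + ·)))
    (hmatch : ∀ z ∈ Γ.edgeSet, ∀ u, ∃! v, Γ.Adj u v ∧ col s(u, v) = col z) :
    HasRegularOneFactorization Γ (Multiplicative V) := by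
  refine ⟨MulAction.toPermHom _ V, colorClasses Γ col, isOneFactorization_colorClasses hmatch,
    fun a => hadj a.toAdd, ?_,
    fun u v => ⟨Multiplicative.ofAdd (v - u), (sub_add_cancel v u : v - u + u = v),
      fun a ha => eq_sub_of_add_eq (a := a.toAdd) ha⟩⟩
  rintro a _ ⟨z, hz, rfl⟩
  exact ⟨z.map (a.toAdd + ·), (map_addLeft_mem_edgeSet_iff hadj _ z).2 hz,
    (image_addLeft_colorClass hadj hcol a.toAdd z).symm⟩

end Coloring

section TwoLayers

variable {G : Type*} [AddCommGroup G]

lemma zmod2_eq_zero_or_one (t : ZMod 2) : t = 0 ∨ t = 1 := by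
  revert t; decide

lemma zmod2_eq_add_one_iff_ne {t r : ZMod 2} : r = t + 1 ↔ t ≠ r := by
  revert t r; decide

def layerSign (t : ZMod 2) (s : G) : G := if t = 0 then s else -s

lemma layerSign_add (t t' : ZMod 2) (s : G) :
    layerSign (t + t') s = layerSign t (layerSign t' s) := by
  rcases zmod2_eq_zero_or_one t with rfl | rfl <;> rcases zmod2_eq_zero_or_one t' with rfl | rfl <;>
    simp [layerSign, CharTwo.add_self_eq_zero]

lemma layerSign_neg (t : ZMod 2) (s : G) : layerSign t (-s) = -layerSign t s := by
  rcases zmod2_eq_zero_or_one t with rfl | rfl <;> simp [layerSign]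

lemma layerSign_involutive (t : ZMod 2) : Function.Involutive (layerSign (G := G) t) := by
  intro s; rcases zmod2_eq_zero_or_one t with rfl | rfl <;> simp [layerSign]

lemma layerSign_of_neg_eq {h : G} (hh : -h = h) (t : ZMod 2) : layerSign t h = h := by
  rcases zmod2_eq_zero_or_one t with rfl | rfl <;> simp [layerSign, hh]

lemma layerSign_eq_zero_iff (t : ZMod 2) {s : G} : layerSign t s = 0 ↔ s = 0 := by
  rcases zmod2_eq_zero_or_one t with rfl | rfl <;> simp [layerSign]

section EdgeColor

variable [DecidableEq G] (h : G)

def edgeColorFun (u v : G × ZMod 2) : G ⊕ G :=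
  if u.2 = v.2 then .inl (u.1 + v.1)
  else if layerSign u.2 (v.1 - u.1) = h then .inl (u.1 + v.1 + h)
  else .inr (layerSign u.2 (v.1 - u.1))

lemma edgeColorFun_comm (u v : G × ZMod 2) : edgeColorFun h u v = edgeColorFun h v u := by
  unfold edgeColorFun
  by_cases ht : u.2 = v.2
  · simp [ht, add_comm]
  · have hsign : layerSign v.2 (u.1 - v.1) = layerSign u.2 (v.1 - u.1) := by
      rw [zmod2_eq_add_one_iff_ne.2 ht, add_comm, layerSign_add, ← neg_sub, layerSign_neg]
      simp [layerSign]
    simp [ht, Ne.symm ht, hsign, add_comm u.1]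

def edgeColor : Sym2 (G × ZMod 2) → G ⊕ G := Sym2.lift ⟨edgeColorFun h, edgeColorFun_comm h⟩

variable {h}

lemma edgeColorFun_add (hh : -h = h) (a u v : G × ZMod 2) :
    edgeColorFun h (a + u) (a + v) =
      Sum.map (· + (a.1 + a.1)) (layerSign a.2) (edgeColorFun h u v) := by
  have hsign : ∀ s, layerSign a.2 s = h ↔ s = h := fun s => by
    rw [(layerSign_involutive a.2).eq_iff, layerSign_of_neg_eq hh]
  simp only [edgeColorFun, Prod.fst_add, Prod.snd_add, add_right_inj, add_sub_add_left_eq_sub,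
    layerSign_add, hsign]
  split_ifs <;> simp only [Sum.map_inl, Sum.map_inr, Sum.inl.injEq] <;> abel

lemma ne_and_edgeColorFun_eq_inl_iff (hh0 : h ≠ 0) (hh : -h = h) {u v : G × ZMod 2} {w : G} :
    u.1 ≠ v.1 ∧ edgeColorFun h u v = .inl w ↔
      v = if u.1 + u.1 = w then (u.1 + h, u.2 + 1) else (w - u.1, u.2) := by
  obtain ⟨x, t⟩ := u
  obtain ⟨y, r⟩ := v
  have hsign : layerSign t (y - x) = h ↔ y = x + h := by
    rw [(layerSign_involutive t).eq_iff, layerSign_of_neg_eq hh, sub_eq_iff_eq_add']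
  have hsum : x + (x + h) + h = x + x := by
    rw [show x + (x + h) + h = x + x + (h + h) by abel, neg_eq_iff_add_eq_zero.1 hh, add_zero]
  have hne : x ≠ x + h := by simpa using hh0
  have hlayer := @zmod2_eq_add_one_iff_ne t r
  simp only [edgeColorFun, hsign]
  split_ifs with hw htr hy <;> simp only [Sum.inl.injEq, Prod.mk.injEq, and_false]
  all_goals grind

lemma ne_and_edgeColorFun_eq_inr_iff {u v : G × ZMod 2} {s : G} (hs0 : s ≠ 0) (hsh : s ≠ h) :
    u.1 ≠ v.1 ∧ edgeColorFun h u v = .inr s ↔ v = (u.1 + layerSign u.2 s, u.2 + 1) := by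
  obtain ⟨x, t⟩ := u
  obtain ⟨y, r⟩ := v
  have hsign : layerSign t (y - x) = s ↔ y = x + layerSign t s := by
    rw [(layerSign_involutive t).eq_iff, sub_eq_iff_eq_add']
  have hlayer := @zmod2_eq_add_one_iff_ne t r
  have hsign0 := (layerSign_eq_zero_iff t).not.2 hs0
  simp only [edgeColorFun]
  split_ifs with htr hy <;> simp only [Sum.inr.injEq, Prod.mk.injEq, hsign]
  all_goals grind

lemma edgeColorFun_eq_inr {u v : G × ZMod 2} {s : G} (huv : u.1 ≠ v.1)
    (hc : edgeColorFun h u v = .inr s) : s ≠ 0 ∧ s ≠ h := by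
  simp only [edgeColorFun] at hc
  split_ifs at hc with htr hsh
  obtain rfl := Sum.inr_injective hc
  exact ⟨(layerSign_eq_zero_iff _).not.2 (sub_ne_zero.2 huv.symm), hsh⟩

lemma edgeColor_map_add (hh : -h = h) (a : G × ZMod 2) (z : Sym2 (G × ZMod 2)) :
    edgeColor h (z.map (a + ·)) = Sum.map (· + (a.1 + a.1)) (layerSign a.2) (edgeColor h z) := by
  induction z using Sym2.inductionOn with
  | hf u v => exact edgeColorFun_add hh a u v

lemma existsUnique_adj_edgeColor_eq (hh0 : h ≠ 0) (hh : -h = h)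
    {z : Sym2 (G × ZMod 2)} (hz : z ∈ ((⊤ : SimpleGraph G).comap Prod.fst).edgeSet)
    (u : G × ZMod 2) :
    ∃! v, ((⊤ : SimpleGraph G).comap Prod.fst).Adj u v ∧ edgeColor h s(u, v) = edgeColor h z := by
  induction z using Sym2.inductionOn with
  | hf p q =>
    simp only [edgeColor, Sym2.lift_mk, mem_edgeSet, comap_adj, top_adj] at hz ⊢
    rcases hc : edgeColorFun h p q with w | s
    · exact (existsUnique_congr fun v => ne_and_edgeColorFun_eq_inl_iff hh0 hh).2 existsUnique_eq
    · obtain ⟨hs0, hsh⟩ := edgeColorFun_eq_inr hz hc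
      exact (existsUnique_congr fun v => ne_and_edgeColorFun_eq_inr_iff hs0 hsh).2 existsUnique_eq

end EdgeColor

theorem hasRegularOneFactorization_comap_fst {h : G} (hh : addOrderOf h = 2) :
    HasRegularOneFactorization ((⊤ : SimpleGraph G).comap (Prod.fst : G × ZMod 2 → G))
      (Multiplicative (G × ZMod 2)) := by
  classical
  obtain ⟨h2, hh0⟩ := addOrderOf_eq_prime_iff.1 hh
  have hneg : -h = h := neg_eq_of_add_eq_zero_right (by rwa [two_nsmul] at h2)
  refine hasRegularOneFactorization_of_coloring (col := edgeColor h) (fun a u v => by simp)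
    (fun a z₁ z₂ hc => ?_) fun z hz => existsUnique_adj_edgeColor_eq hh0 hneg hz
  rw [edgeColor_map_add hneg, edgeColor_map_add hneg, hc]

end TwoLayers

def completeMultipartiteIsoComapFst (m : ℕ) [NeZero m] :
    completeMultipartite m 2 ≃g
      (⊤ : SimpleGraph (ZMod m)).comap (Prod.fst : ZMod m × ZMod 2 → ZMod m) where
  toEquiv := (ZMod.finEquiv m).toEquiv.prodCongr (ZMod.finEquiv 2).toEquiv
  map_rel_iff' := (ZMod.finEquiv m).injective.ne_iff

/-- For `m = 2^v d`, `v ≥ 1`, `d` odd, `K_{m×2}` has a 1-factorization with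
`C_m × Z_2` acting sharply transitively on the vertices. -/
theorem abelian_oneFactorization_bipartition_two (v d : ℕ) (hv : 1 ≤ v) (hd : Odd d) :
    HasRegularOneFactorization (completeMultipartite (2 ^ v * d) 2)
      (Multiplicative (ZMod (2 ^ v * d) × ZMod 2)) := by
  have : NeZero (2 ^ v * d) := ⟨(Nat.mul_pos (by positivity) hd.pos).ne'⟩
  have h2 : 2 ∣ Nat.card (ZMod (2 ^ v * d)) := by
    rw [Nat.card_zmod]
    exact (dvd_pow_self 2 (by omega)).mul_right d
  obtain ⟨h, hh⟩ := exists_prime_addOrderOf_dvd_card' 2 h2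
  exact (hasRegularOneFactorization_comap_fst hh).of_iso (completeMultipartiteIsoComapFst _)
end
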